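/- Let M, M_s be positive integers with (M, M_s) ≠ (1, 1), let θ ∈ ℝ with cos(θ) ≠ 0, let s₀ ∈ ℝ, σ > 0, c > 0, and α_s ∈ ℂ with α_s ≠ 0. Let a(θ) = a_{M_s}(θ), and let q(θ) ∈ ℂ^M have m-th entry exp(iπ (s₀ − sin(θ))(2m−1−M)/2). Let ȧ(θ) and q̇(θ) denote the derivatives of a and q with respect to θ, and let X ∈ ℂ^{M×L} satisfy X X^H = cL · I_M. Define u(θ) = a(θ) q(θ)^T X with derivative u̇(θ). Then σ² / (2|α_s|² (tr(u̇(θ) u̇(θ)^H) − |tr(u(θ) u̇(θ)^H)|²/tr(u(θ) u(θ)^H))) = 6σ² / (cL |α_s|² π² cos²(θ) · M · M_s · (M² + M_s² − 2)). -/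

import Mathlib

/-!
The vectors `a(θ)` and `q(θ)` are linear-phase vectors `m ↦ exp(i φ dₘ)` whose element positions
`dₘ = (2m + 1 - n)/2` are centred at the middle of the array, so the derivative of each is
`i φ' dₘ` times itself. Since `∑ dₘ = 0`, each is orthogonal to its own derivative, which kills
the cross term `tr(u u̇ᴴ)`. Because `X Xᴴ = cL · I`, the trace of a product of two rank-one
matrices times `X` factors into two dot products, and `∑ dₘ² = n(n² - 1)/12` then gives
`tr(u̇ u̇ᴴ) = cL π² cos²θ · M Mₛ (M² + Mₛ² - 2)/12`.
-/

open Matrix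

/-- ULA array response vector: `[a_M(θ)]_m = exp(iπ sin(θ)(2m−1−M)/2)` for `m = 1, …, M`. -/
noncomputable def ula (M : ℕ) (θ : ℝ) : Fin M → ℂ :=
  fun m => Complex.exp (Complex.I *
    ((Real.pi * Real.sin θ * ((2 * (m : ℝ) + 1 - (M : ℝ)) / 2) : ℝ) : ℂ))

noncomputable def centeredPos (n : ℕ) (m : Fin n) : ℝ := (2 * (m : ℝ) + 1 - n) / 2

theorem sum_fin_val (n : ℕ) : ∑ m : Fin n, (m : ℝ) = n * (n - 1) / 2 := by
  induction n with
  | zero => simp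
  | succ n ih =>
    rw [Fin.sum_univ_castSucc]
    simp only [Fin.val_castSucc, Fin.val_last, ih]
    push_cast
    ring

theorem sum_fin_val_sq (n : ℕ) : ∑ m : Fin n, (m : ℝ) ^ 2 = n * (n - 1) * (2 * n - 1) / 6 := by
  induction n with
  | zero => simp
  | succ n ih =>
    rw [Fin.sum_univ_castSucc]
    simp only [Fin.val_castSucc, Fin.val_last, ih]
    push_cast
    ring

theorem sum_centeredPos (n : ℕ) : ∑ m, centeredPos n m = 0 := by
  simp only [centeredPos, ← Finset.sum_div, Finset.sum_sub_distrib, Finset.sum_add_distrib,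
    ← Finset.mul_sum, sum_fin_val, Finset.sum_const, Finset.card_univ, Fintype.card_fin,
    nsmul_eq_mul]
  ring

theorem sum_centeredPos_sq (n : ℕ) : ∑ m, centeredPos n m ^ 2 = n * ((n : ℝ) ^ 2 - 1) / 12 := by
  have h : ∀ m : Fin n, centeredPos n m ^ 2 = (m : ℝ) ^ 2 + (1 - n) * m + (1 - n) ^ 2 / 4 :=
    fun m => by unfold centeredPos; ring
  simp only [h, Finset.sum_add_distrib, ← Finset.mul_sum, sum_fin_val_sq, sum_fin_val,
    Finset.sum_const, Finset.card_univ, Fintype.card_fin, nsmul_eq_mul]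
  ring

section LinearPhase

open Complex

noncomputable def linearPhase (n : ℕ) (φ : ℝ) : Fin n → ℂ :=
  fun m => exp (I * ((φ * centeredPos n m : ℝ) : ℂ))

noncomputable def linearPhaseDeriv (n : ℕ) (φ φ' : ℝ) : Fin n → ℂ :=
  fun m => I * ((φ' * centeredPos n m : ℝ) : ℂ) * linearPhase n φ m

theorem ula_eq_linearPhase (n : ℕ) (θ : ℝ) : ula n θ = linearPhase n (Real.pi * Real.sin θ) :=
  rfl

theorem hasDerivAt_linearPhase {g : ℝ → ℝ} {g' θ : ℝ} (hg : HasDerivAt g g' θ) (n : ℕ)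
    (m : Fin n) :
    HasDerivAt (fun t => linearPhase n (g t) m) (linearPhaseDeriv n (g θ) g' m) θ := by
  have h := ((hg.mul_const (centeredPos n m)).ofReal_comp.const_mul I).cexp
  simp only [linearPhaseDeriv, linearPhase]
  convert h using 1
  push_cast
  ring

theorem linearPhase_mul_star (n : ℕ) (φ : ℝ) (m : Fin n) :
    linearPhase n φ m * star (linearPhase n φ m) = 1 := by
  rw [linearPhase, star_def, ← exp_conj, ← exp_add]
  simp [conj_ofReal]

theorem linearPhase_dotProduct_star (n : ℕ) (φ : ℝ) :
    linearPhase n φ ⬝ᵥ star (linearPhase n φ) = n := by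
  simp only [dotProduct, Pi.star_apply, linearPhase_mul_star, Finset.sum_const, Finset.card_univ,
    Fintype.card_fin, nsmul_eq_mul, mul_one]

theorem linearPhaseDeriv_dotProduct_star (n : ℕ) (φ φ' : ℝ) :
    linearPhaseDeriv n φ φ' ⬝ᵥ star (linearPhase n φ) = 0 := by
  have h : ∀ m, linearPhaseDeriv n φ φ' m * star (linearPhase n φ m)
      = I * φ' * centeredPos n m := fun m => by
    rw [linearPhaseDeriv, mul_assoc, linearPhase_mul_star]; push_cast; ring
  simp only [dotProduct, Pi.star_apply, h, ← Finset.mul_sum, ← ofReal_sum, sum_centeredPos,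
    ofReal_zero, mul_zero]

theorem linearPhase_dotProduct_star_deriv (n : ℕ) (φ φ' : ℝ) :
    linearPhase n φ ⬝ᵥ star (linearPhaseDeriv n φ φ') = 0 := by
  rw [dotProduct_star, linearPhaseDeriv_dotProduct_star, star_zero]

theorem linearPhaseDeriv_dotProduct_star_self (n : ℕ) (φ φ' : ℝ) :
    linearPhaseDeriv n φ φ' ⬝ᵥ star (linearPhaseDeriv n φ φ')
      = ((φ' ^ 2 * (n * ((n : ℝ) ^ 2 - 1) / 12) : ℝ) : ℂ) := by
  have h : ∀ m, linearPhaseDeriv n φ φ' m * star (linearPhaseDeriv n φ φ' m)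
      = ((φ' ^ 2 * centeredPos n m ^ 2 : ℝ) : ℂ) := fun m => by
    have hu := linearPhase_mul_star n φ m
    simp only [linearPhaseDeriv, star_mul', star_def, conj_I, conj_ofReal] at hu ⊢
    push_cast
    linear_combination
      -(I * φ' * centeredPos n m) ^ 2 * hu - ((φ' : ℂ) * centeredPos n m) ^ 2 * I_sq
  simp only [dotProduct, Pi.star_apply, h, ← ofReal_sum, ← Finset.mul_sum, sum_centeredPos_sq]

end LinearPhase

theorem trace_vecMulVec_mul_mul_conjTranspose {R l m n : Type*} [CommSemiring R] [StarRing R]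
    [Fintype l] [Fintype m] [DecidableEq m] [Fintype n] {X : Matrix m n R} {k : R}
    (hX : X * Xᴴ = k • 1) (p r : l → R) (q s : m → R) :
    trace ((vecMulVec p q * X) * (vecMulVec r s * X)ᴴ) = k * ((q ⬝ᵥ star s) * (p ⬝ᵥ star r)) := by
  rw [conjTranspose_mul, conjTranspose_vecMulVec, Matrix.mul_assoc, ← Matrix.mul_assoc X, hX,
    Matrix.smul_mul, Matrix.one_mul, Matrix.mul_smul, vecMulVec_mul_vecMulVec, trace_smul,
    trace_vecMulVec, dotProduct_smul, smul_eq_mul, smul_eq_mul]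

theorem hasDerivAt_vecMulVec_mul_apply {𝕜 𝕜' l m n : Type*} [NontriviallyNormedField 𝕜]
    [NormedField 𝕜'] [NormedAlgebra 𝕜 𝕜'] [Fintype m] {a : 𝕜 → l → 𝕜'} {q : 𝕜 → m → 𝕜'}
    {a' : l → 𝕜'} {q' : m → 𝕜'} {θ : 𝕜} (ha : ∀ i, HasDerivAt (fun t => a t i) (a' i) θ)
    (hq : ∀ j, HasDerivAt (fun t => q t j) (q' j) θ) (X : Matrix m n 𝕜') (i : l) (j : n) :
    HasDerivAt (fun t => (vecMulVec (a t) (q t) * X) i j)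
      ((vecMulVec a' (q θ) * X + vecMulVec (a θ) q' * X) i j) θ := by
  simp only [Matrix.add_apply, mul_apply, vecMulVec_apply, ← Finset.sum_add_distrib, ← add_mul]
  exact HasDerivAt.fun_sum fun r _ => ((ha i).mul (hq r)).mul_const _

theorem stmt_18_general (M Ms L : ℕ)
    (θ : ℝ) (s₀ : ℝ) (σ : ℝ)
    (c : ℝ) (αs : ℂ)
    (qfun : ℝ → Fin M → ℂ)
    (hqfun : ∀ t : ℝ, ∀ m : Fin M, qfun t m = Complex.exp (Complex.I *
      ((Real.pi * (s₀ - Real.sin t) * ((2 * (m : ℝ) + 1 - (M : ℝ)) / 2) : ℝ) : ℂ)))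
    (adot : Fin Ms → ℂ) (hadot : ∀ m : Fin Ms, HasDerivAt (fun t => ula Ms t m) (adot m) θ)
    (qdot : Fin M → ℂ) (hqdot : ∀ m : Fin M, HasDerivAt (fun t => qfun t m) (qdot m) θ)
    (X : Matrix (Fin M) (Fin L) ℂ)
    (hX : X * X.conjTranspose = ((c * (L : ℝ) : ℝ) : ℂ) • (1 : Matrix (Fin M) (Fin M) ℂ))
    (u udot : Matrix (Fin Ms) (Fin L) ℂ)
    (hu : u = Matrix.vecMulVec (ula Ms θ) (qfun θ) * X)
    (hudot : ∀ i j, HasDerivAt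
      (fun t => (Matrix.vecMulVec (ula Ms t) (qfun t) * X) i j) (udot i j) θ) :
    ((σ ^ 2 : ℝ) : ℂ) / (2 * ((‖αs‖ ^ 2 : ℝ) : ℂ) *
        (Matrix.trace (udot * udot.conjTranspose)
          - ((‖Matrix.trace (u * udot.conjTranspose)‖ ^ 2 : ℝ) : ℂ)
              / Matrix.trace (u * u.conjTranspose)))
      = ((6 * σ ^ 2 : ℝ) : ℂ) / ((c * (L : ℝ) * ‖αs‖ ^ 2 * Real.pi ^ 2 * Real.cos θ ^ 2 *
          (M : ℝ) * (Ms : ℝ) * ((M : ℝ) ^ 2 + (Ms : ℝ) ^ 2 - 2) : ℝ) : ℂ) := by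
  obtain rfl : qfun = fun t => linearPhase M (Real.pi * (s₀ - Real.sin t)) :=
    funext fun t => funext (hqfun t)
  have ha : ∀ m, HasDerivAt (fun t => ula Ms t m)
      (linearPhaseDeriv Ms (Real.pi * Real.sin θ) (Real.pi * Real.cos θ) m) θ :=
    hasDerivAt_linearPhase ((Real.hasDerivAt_sin θ).const_mul _) Ms
  have hq : ∀ m, HasDerivAt (fun t => linearPhase M (Real.pi * (s₀ - Real.sin t)) m)
      (linearPhaseDeriv M (Real.pi * (s₀ - Real.sin θ)) (Real.pi * -Real.cos θ) m) θ :=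
    hasDerivAt_linearPhase (((Real.hasDerivAt_sin θ).const_sub s₀).const_mul _) M
  obtain rfl : adot = _ := funext fun m => (hadot m).unique (ha m)
  obtain rfl : qdot = _ := funext fun m => (hqdot m).unique (hq m)
  obtain rfl : udot = _ := Matrix.ext fun i j =>
    (hudot i j).unique (hasDerivAt_vecMulVec_mul_apply ha hq X i j)
  subst hu
  simp only [conjTranspose_add, Matrix.mul_add, Matrix.add_mul, trace_add,
    trace_vecMulVec_mul_mul_conjTranspose hX, ula_eq_linearPhase, linearPhase_dotProduct_star,
    linearPhaseDeriv_dotProduct_star, linearPhase_dotProduct_star_deriv,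
    linearPhaseDeriv_dotProduct_star_self, mul_zero, zero_mul, add_zero, zero_add, norm_zero,
    zero_pow two_ne_zero, Complex.ofReal_zero, zero_div, sub_zero]
  rw [show (2 : ℂ) * _ * _ = ((c * (L : ℝ) * ‖αs‖ ^ 2 * Real.pi ^ 2 * Real.cos θ ^ 2 *
      (M : ℝ) * (Ms : ℝ) * ((M : ℝ) ^ 2 + (Ms : ℝ) ^ 2 - 2) : ℝ) : ℂ) / 6 by push_cast; ring,
    div_div_eq_mul_div]
  push_cast
  ring

/-- Closed-form CRB for the STAS beam-scanning model: with `a(θ) = a_{M_s}(θ)`,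
`[q(θ)]_m = exp(iπ(s₀ − sin θ)(2m−1−M)/2)`, `X X^H = cL · I_M`, and
`u(θ) = a(θ) q(θ)^T X` with derivative `u̇(θ)`,
`σ²/(2|α_s|²(tr(u̇u̇^H) − |tr(uu̇^H)|²/tr(uu^H))) = 6σ²/(cL|α_s|²π²cos²θ·M·M_s·(M²+M_s²−2))`. -/
theorem stmt_18 (M Ms L : ℕ) (hM : 1 ≤ M) (hMs : 1 ≤ Ms) (hnot : ¬(M = 1 ∧ Ms = 1))
    (θ : ℝ) (hcos : Real.cos θ ≠ 0) (s₀ : ℝ) (σ : ℝ) (hσ : 0 < σ)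
    (c : ℝ) (hc : 0 < c) (αs : ℂ) (hαs : αs ≠ 0)
    (qfun : ℝ → Fin M → ℂ)
    (hqfun : ∀ t : ℝ, ∀ m : Fin M, qfun t m = Complex.exp (Complex.I *
      ((Real.pi * (s₀ - Real.sin t) * ((2 * (m : ℝ) + 1 - (M : ℝ)) / 2) : ℝ) : ℂ)))
    (adot : Fin Ms → ℂ) (hadot : ∀ m : Fin Ms, HasDerivAt (fun t => ula Ms t m) (adot m) θ)
    (qdot : Fin M → ℂ) (hqdot : ∀ m : Fin M, HasDerivAt (fun t => qfun t m) (qdot m) θ)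
    (X : Matrix (Fin M) (Fin L) ℂ)
    (hX : X * X.conjTranspose = ((c * (L : ℝ) : ℝ) : ℂ) • (1 : Matrix (Fin M) (Fin M) ℂ))
    (u udot : Matrix (Fin Ms) (Fin L) ℂ)
    (hu : u = Matrix.vecMulVec (ula Ms θ) (qfun θ) * X)
    (hudot : ∀ i j, HasDerivAt
      (fun t => (Matrix.vecMulVec (ula Ms t) (qfun t) * X) i j) (udot i j) θ) :
    ((σ ^ 2 : ℝ) : ℂ) / (2 * ((‖αs‖ ^ 2 : ℝ) : ℂ) *
        (Matrix.trace (udot * udot.conjTranspose)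
          - ((‖Matrix.trace (u * udot.conjTranspose)‖ ^ 2 : ℝ) : ℂ)
              / Matrix.trace (u * u.conjTranspose)))
      = ((6 * σ ^ 2 : ℝ) : ℂ) / ((c * (L : ℝ) * ‖αs‖ ^ 2 * Real.pi ^ 2 * Real.cos θ ^ 2 *
          (M : ℝ) * (Ms : ℝ) * ((M : ℝ) ^ 2 + (Ms : ℝ) ^ 2 - 2) : ℝ) : ℂ) :=
  stmt_18_general M Ms L θ s₀ σ c αs qfun hqfun adot hadot qdot hqdot X hX u udot hu hudot
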